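/- arXiv:2501.04417 — 3 statements merged into one kernel-verified Lean document; each statement's English description precedes it below -/
import Mathlib

section
/- For every integer n ≥ 3 and every numerical semigroup S with maximum primitive n, the primitive depth of S equals the depth of Φ(S), where Φ(S) = (S \ {n}) ∪ (n, ∞). That is, ⌈max P(S)/min P(S)⌉ = ⌈F(Φ(S))/m(Φ(S))⌉. -/
/-- A numerical semigroup: a cofinite additive submonoid of ℕ containing 0. -/
structure NumericalSemigroup where
  carrier : Set ℕ
  zero_mem : 0 ∈ carrier
  add_mem : ∀ ⦃a b : ℕ⦄, a ∈ carrier → b ∈ carrier → a + b ∈ carrier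
  cofinite : (carrierᶜ : Set ℕ).Finite

namespace NumericalSemigroup

/-- The primitives (minimal generators): nonzero elements not expressible as a sum
of two nonzero elements. -/
def primitives (S : NumericalSemigroup) : Set ℕ :=
  {x | x ∈ S.carrier ∧ x ≠ 0 ∧
    ¬ ∃ a b : ℕ, a ∈ S.carrier ∧ b ∈ S.carrier ∧ a ≠ 0 ∧ b ≠ 0 ∧ x = a + b}

/-- The maximum primitive. -/
noncomputable def maxPrim (S : NumericalSemigroup) : ℕ := sSup (primitives S)

/-- The multiplicity: the least primitive (= least nonzero element). -/
noncomputable def multiplicity (S : NumericalSemigroup) : ℕ := sInf (primitives S)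

/-- The Frobenius number: the largest gap (0 for ℕ by convention here). -/
noncomputable def frob (S : NumericalSemigroup) : ℕ := sSup (S.carrierᶜ)

/-- The set of left elements. -/
noncomputable def lefts (S : NumericalSemigroup) : Set ℕ := S.carrier ∩ Set.Iio (frob S)

/-- The extended set of left elements. -/
noncomputable def extLefts (S : NumericalSemigroup) : Set ℕ := lefts S ∪ {frob S}

end NumericalSemigroup

open NumericalSemigroup

/-- The gcd of a set of naturals: the greatest common divisor of all its elements. -/
noncomputable def setGcd (A : Set ℕ) : ℕ := sSup {d | ∀ x ∈ A, d ∣ x}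

/-- The number of numerical semigroups with maximum primitive `n`. -/
noncomputable def countMaxPrim (n : ℕ) : ℕ :=
  {S : NumericalSemigroup | maxPrim S = n}.ncard

/-- The number of numerical semigroups with Frobenius number `n`. -/
noncomputable def countFrob (n : ℕ) : ℕ :=
  {S : NumericalSemigroup | frob S = n}.ncard

/-!
The multiplicity `m` of `S` is strictly below its largest primitive `n` (otherwise every
primitive, hence every element, of `S` would be a multiple of `n ≥ 2`, which two consecutive
elements beyond the Frobenius number forbid). Removing `n` and adding everything above it
therefore keeps `m` as the least nonzero element and makes `n` the largest gap, so both
ceilings are `⌈n / m⌉`.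
-/

namespace NumericalSemigroup

variable (S : NumericalSemigroup)

lemma isLeast_multiplicity :
    IsLeast {x | x ∈ S.carrier ∧ x ≠ 0} S.multiplicity := by
  set A := {x | x ∈ S.carrier ∧ x ≠ 0}
  have hA : A.Nonempty := by
    obtain ⟨a, ha, ha0⟩ := (compl_compl S.carrier ▸ S.cofinite.infinite_compl).exists_gt 0
    exact ⟨a, ha, ha0.ne'⟩
  have hmem : sInf A ∈ A := Nat.sInf_mem hA
  have hprim : sInf A ∈ S.primitives := by
    refine ⟨hmem.1, hmem.2, ?_⟩
    rintro ⟨a, b, ha, hb, ha0, hb0, hab⟩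
    have : sInf A ≤ a := Nat.sInf_le ⟨ha, ha0⟩
    omega
  have hleast : IsLeast S.primitives (sInf A) :=
    ⟨hprim, fun p hp => Nat.sInf_le ⟨hp.1, hp.2.1⟩⟩
  rw [multiplicity, hleast.csInf_eq]
  exact ⟨hmem, fun x hx => Nat.sInf_le hx⟩

lemma multiplicity_mem_primitives : S.multiplicity ∈ S.primitives := by
  obtain ⟨⟨hmS, hm0⟩, hleast⟩ := S.isLeast_multiplicity
  refine ⟨hmS, hm0, ?_⟩
  rintro ⟨a, b, ha, -, ha0, hb0, hab⟩
  have := hleast ⟨ha, ha0⟩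
  omega

lemma mem_of_frob_lt {x : ℕ} (hx : S.frob < x) : x ∈ S.carrier := by
  by_contra h
  exact hx.not_ge (le_csSup S.cofinite.bddAbove h)

lemma bddAbove_primitives : BddAbove S.primitives := by
  refine ⟨S.frob + S.multiplicity, fun x hx => ?_⟩
  by_contra! hlt
  obtain ⟨hmS, hm0⟩ := (S.isLeast_multiplicity).1
  exact hx.2.2 ⟨S.multiplicity, x - S.multiplicity, hmS, S.mem_of_frob_lt (by omega), hm0,
    by omega, by omega⟩

lemma maxPrim_mem_primitives : S.maxPrim ∈ S.primitives :=
  Nat.sSup_mem ⟨_, S.multiplicity_mem_primitives⟩ S.bddAbove_primitives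

lemma dvd_of_forall_primitives_dvd {d : ℕ} (hd : ∀ p ∈ S.primitives, d ∣ p) :
    ∀ x ∈ S.carrier, d ∣ x := by
  intro x
  induction x using Nat.strong_induction_on with
  | _ x ih =>
    intro hx
    rcases eq_or_ne x 0 with rfl | hx0
    · exact dvd_zero d
    by_cases hsum : ∃ a b, a ∈ S.carrier ∧ b ∈ S.carrier ∧ a ≠ 0 ∧ b ≠ 0 ∧ x = a + b
    · obtain ⟨a, b, ha, hb, ha0, hb0, rfl⟩ := hsum
      exact dvd_add (ih a (by omega) ha) (ih b (by omega) hb)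
    · exact hd x ⟨hx, hx0, hsum⟩

lemma multiplicity_lt_maxPrim (h : 2 ≤ S.maxPrim) : S.multiplicity < S.maxPrim := by
  have hle : S.multiplicity ≤ S.maxPrim := Nat.sInf_le S.maxPrim_mem_primitives
  refine hle.lt_of_ne fun heq => ?_
  have hprim : ∀ p ∈ S.primitives, S.maxPrim ∣ p := fun p hp => by
    have : S.multiplicity ≤ p := Nat.sInf_le hp
    have : p ≤ S.maxPrim := le_csSup S.bddAbove_primitives hp
    exact ⟨1, by omega⟩
  have hdvd := S.dvd_of_forall_primitives_dvd hprim
  have h1 := hdvd (S.frob + 1) (S.mem_of_frob_lt (by omega))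
  have h2 := hdvd (S.frob + 1 + 1) (S.mem_of_frob_lt (by omega))
  have := Nat.le_of_dvd one_pos ((Nat.dvd_add_right h1).mp h2)
  omega

lemma frob_eq_of_notMem_of_forall_gt_mem {n : ℕ} (hn : n ∉ S.carrier)
    (hgt : ∀ x, n < x → x ∈ S.carrier) : S.frob = n :=
  IsGreatest.csSup_eq ⟨hn, fun x hx => not_lt.mp fun h => hx (hgt x h)⟩

variable {S}

lemma frob_eq_of_carrier_eq_sdiff_union_Ioi {T : NumericalSemigroup} {n : ℕ}
    (hT : T.carrier = (S.carrier \ {n}) ∪ Set.Ioi n) : T.frob = n := by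
  refine T.frob_eq_of_notMem_of_forall_gt_mem ?_ fun x hx => hT ▸ Or.inr hx
  rw [hT]
  rintro (⟨-, hn⟩ | hn)
  · exact hn rfl
  · exact lt_irrefl n hn

lemma multiplicity_eq_of_carrier_eq_sdiff_union_Ioi {T : NumericalSemigroup} {n : ℕ}
    (hT : T.carrier = (S.carrier \ {n}) ∪ Set.Ioi n) (hm : S.multiplicity < n) :
    T.multiplicity = S.multiplicity := by
  obtain ⟨⟨hmS, hm0⟩, hleast⟩ := S.isLeast_multiplicity
  refine (T.isLeast_multiplicity).unique ⟨⟨hT ▸ Or.inl ⟨hmS, hm.ne⟩, hm0⟩, ?_⟩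
  rintro x ⟨hx, hx0⟩
  rw [hT] at hx
  rcases hx with ⟨hxS, -⟩ | hxn
  · exact hleast ⟨hxS, hx0⟩
  · exact (hm.trans hxn).le

end NumericalSemigroup

open NumericalSemigroup

theorem pdepth_eq_depth_Phi (n : ℕ) (hn : 3 ≤ n) (S T : NumericalSemigroup)
    (hS : maxPrim S = n)
    (hT : T.carrier = (S.carrier \ {n}) ∪ Set.Ioi n) :
    ⌈(maxPrim S : ℚ) / (multiplicity S : ℚ)⌉
      = ⌈(frob T : ℚ) / (multiplicity T : ℚ)⌉ := by
  have hm : S.multiplicity < n := hS ▸ S.multiplicity_lt_maxPrim (by omega)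
  rw [frob_eq_of_carrier_eq_sdiff_union_Ioi hT,
    multiplicity_eq_of_carrier_eq_sdiff_union_Ioi hT hm, hS]
end

section
/- Let n ≥ 3. The image of the map Φ_n : A_n → N_n, S ↦ (S \ {n}) ∪ (n, ∞), equals the set of numerical semigroups S with Frobenius number n for which gcd(L'(S)) = 1, where L'(S) = (S ∩ [0, F(S))) ∪ {F(S)} is the extended set of left elements. -/
open NumericalSemigroup

/- ### Auxiliary lemmas -/

lemma exists_inv_mod (a n : ℕ) (h : Nat.Coprime a n) : ∃ u, a * u ≡ 1 [MOD n] := by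
  rcases lt_or_ge n 2 with hn | hn
  · interval_cases n
    · refine ⟨1, ?_⟩
      have : a = 1 := Nat.coprime_zero_right a |>.mp h
      simp [this, Nat.ModEq.refl]
    · exact ⟨1, Nat.modEq_one⟩
  · obtain ⟨u, -, hu⟩ := Nat.exists_mul_mod_eq_one_of_coprime h hn
    refine ⟨u, ?_⟩
    unfold Nat.ModEq
    rw [hu, Nat.mod_eq_of_lt hn]

lemma key_two (a b m : ℕ) (ha : 0 < a) (hb : 0 < b) (hd : Nat.gcd a b ∣ m)
    (hm : a * b ≤ m) : ∃ k l, m = k * a + l * b ∧ k * a ≤ a * b := by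
  set g := Nat.gcd a b with hg
  have hg0 : 0 < g := Nat.gcd_pos_of_pos_left _ ha
  obtain ⟨a', ha'⟩ : g ∣ a := Nat.gcd_dvd_left a b
  obtain ⟨b', hb'⟩ : g ∣ b := Nat.gcd_dvd_right a b
  obtain ⟨m', hm'⟩ := hd
  have hcop : Nat.Coprime a' b' := by
    have h2 := Nat.coprime_div_gcd_div_gcd (m := a) (n := b) hg0
    rw [← hg] at h2
    rwa [ha', hb', Nat.mul_div_cancel_left _ hg0, Nat.mul_div_cancel_left _ hg0] at h2
  have hb'0 : 0 < b' := by
    rcases Nat.eq_zero_or_pos b' with h | h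
    · subst h; simp at hb'; omega
    · exact h
  obtain ⟨u, hu⟩ := exists_inv_mod a' b' hcop
  set k := (m' * u) % b' with hk
  have hk_lt : k < b' := Nat.mod_lt _ hb'0
  have hmod : k * a' ≡ m' [MOD b'] := by
    calc k * a' ≡ (m' * u) * a' [MOD b'] := Nat.ModEq.mul_right _ (Nat.mod_modEq _ _)
    _ = m' * (a' * u) := by ring
    _ ≡ m' * 1 [MOD b'] := Nat.ModEq.mul_left _ hu
    _ = m' := by ring
  have hmod2 : k * a ≡ m [MOD b] := by
    have h2 := hmod.mul_right' (c := g)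
    have e1 : k * a = k * a' * g := by rw [ha']; ring
    have e2 : m = m' * g := by rw [hm']; ring
    have e3 : b = b' * g := by rw [hb']; ring
    rw [e1, e2, e3]; exact h2
  have hk_le : k * a ≤ a * b := by
    have h1 : k * a ≤ b' * a := Nat.mul_le_mul_right a (le_of_lt hk_lt)
    have h2 : b' ≤ b := by
      rw [hb']; exact Nat.le_mul_of_pos_left b' hg0
    calc k * a ≤ b' * a := h1
    _ ≤ b * a := Nat.mul_le_mul_right a h2
    _ = a * b := Nat.mul_comm b a
  have hk_le_m : k * a ≤ m := le_trans hk_le hm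
  have hdvd : b ∣ m - k * a := (Nat.modEq_iff_dvd' hk_le_m).mp hmod2
  obtain ⟨l, hl⟩ := hdvd
  rw [Nat.mul_comm b l] at hl
  exact ⟨k, l, by omega, hk_le⟩

lemma closure_gcd (s : Finset ℕ) :
    ∃ N, ∀ m, s.gcd id ∣ m → N ≤ m → m ∈ AddSubmonoid.closure (s : Set ℕ) := by
  induction s using Finset.induction_on with
  | empty =>
    refine ⟨0, fun m hm _ => ?_⟩
    rw [Finset.gcd_empty] at hm
    rw [Nat.eq_zero_of_zero_dvd hm]
    exact AddSubmonoid.zero_mem _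
  | @insert a s ha ih =>
    obtain ⟨N', hN'⟩ := ih
    have hsub : AddSubmonoid.closure (s : Set ℕ) ≤
        AddSubmonoid.closure ((insert a s : Finset ℕ) : Set ℕ) := by
      apply AddSubmonoid.closure_mono
      rw [Finset.coe_insert]
      exact Set.subset_insert _ _
    have hamem : a ∈ AddSubmonoid.closure ((insert a s : Finset ℕ) : Set ℕ) :=
      AddSubmonoid.subset_closure (by simp)
    have hgcd : (insert a s).gcd id = Nat.gcd a (s.gcd id) := by
      rw [Finset.gcd_insert]; rfl
    by_cases ha0 : a = 0
    · refine ⟨N', fun m hm hNm => hsub (hN' m ?_ hNm)⟩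
      rw [hgcd, ha0, Nat.gcd_zero_left] at hm
      exact hm
    · by_cases hg0 : s.gcd id = 0
      · refine ⟨0, fun m hm _ => ?_⟩
        rw [hgcd, hg0, Nat.gcd_zero_right] at hm
        obtain ⟨c, rfl⟩ := hm
        have := AddSubmonoid.nsmul_mem _ hamem c
        rwa [smul_eq_mul, Nat.mul_comm] at this
      · refine ⟨a * s.gcd id + N', fun m hm hNm => ?_⟩
        rw [hgcd] at hm
        obtain ⟨k, l, hkl, hka⟩ := key_two a (s.gcd id) m (Nat.pos_of_ne_zero ha0)
          (Nat.pos_of_ne_zero hg0) hm (le_trans (Nat.le_add_right _ _) hNm)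
        have h1 : k * a ∈ AddSubmonoid.closure ((insert a s : Finset ℕ) : Set ℕ) := by
          have := AddSubmonoid.nsmul_mem _ hamem k
          rwa [smul_eq_mul] at this
        have h2 : l * s.gcd id ∈ AddSubmonoid.closure (s : Set ℕ) :=
          hN' _ ⟨l, Nat.mul_comm l _⟩ (by omega)
        rw [hkl]
        exact AddSubmonoid.add_mem _ h1 (hsub h2)

lemma nat_sSup_facts {s : Set ℕ} {n : ℕ} (h : sSup s = n) (hn : 0 < n) :
    n ∈ s ∧ ∀ x ∈ s, x ≤ n := by
  have hne : s.Nonempty := by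
    rcases Set.eq_empty_or_nonempty s with rfl | h'
    · rw [csSup_empty] at h
      simp only [Nat.bot_eq_zero] at h
      omega
    · exact h'
  have hbdd : BddAbove s := by
    by_contra hb
    rw [csSup_of_not_bddAbove hb, csSup_empty] at h
    simp only [Nat.bot_eq_zero] at h
    omega
  exact ⟨h ▸ Nat.sSup_mem hne hbdd, fun x hx => h ▸ le_csSup hbdd hx⟩

/-- Every element of a numerical semigroup is divisible by any common divisor
of its primitives. -/
lemma dvd_of_dvd_primitives (S : NumericalSemigroup) (d : ℕ)
    (h : ∀ p ∈ primitives S, d ∣ p) : ∀ x ∈ S.carrier, d ∣ x := by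
  intro x
  induction x using Nat.strong_induction_on with
  | _ x ih =>
    intro hx
    rcases eq_or_ne x 0 with rfl | hx0
    · exact dvd_zero d
    by_cases hp : x ∈ primitives S
    · exact h x hp
    · have hdec : ∃ a b : ℕ, a ∈ S.carrier ∧ b ∈ S.carrier ∧ a ≠ 0 ∧ b ≠ 0 ∧ x = a + b := by
        by_contra hc
        exact hp ⟨hx, hx0, hc⟩
      obtain ⟨a, b, haS, hbS, ha0, hb0, rfl⟩ := hdec
      exact Nat.dvd_add (ih a (by omega) haS) (ih b (by omega) hbS)

theorem image_Phi_eq (n : ℕ) (hn : 3 ≤ n) :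
    {T : NumericalSemigroup | ∃ S : NumericalSemigroup, maxPrim S = n ∧
        T.carrier = (S.carrier \ {n}) ∪ Set.Ioi n}
      = {T : NumericalSemigroup | frob T = n ∧ setGcd (extLefts T) = 1} := by
  have hn0 : 0 < n := by omega
  ext T
  simp only [Set.mem_setOf_eq]
  constructor
  · rintro ⟨S, hS, hT⟩
    obtain ⟨hnprim, hple⟩ := nat_sSup_facts hS hn0
    have hnS : n ∈ S.carrier := hnprim.1
    -- Frobenius number of T is n
    have h1 : n ∉ T.carrier := by
      rw [hT]
      rintro (⟨-, hmem⟩ | hlt)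
      · exact hmem rfl
      · exact lt_irrefl n hlt
    have h2 : ∀ x ∈ T.carrierᶜ, x ≤ n := by
      intro x hx
      by_contra hgt
      push_neg at hgt
      exact hx (hT ▸ Or.inr hgt)
    have hfT : frob T = n :=
      le_antisymm (csSup_le ⟨n, h1⟩ h2) (le_csSup T.cofinite.bddAbove h1)
    refine ⟨hfT, ?_⟩
    -- gcd of extended left elements is 1
    have hdvd_one : ∀ d, (∀ x ∈ extLefts T, d ∣ x) → d = 1 := by
      intro d hd
      have hdn : d ∣ n := by
        have := hd (frob T) (Set.mem_union_right _ rfl)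
        rwa [hfT] at this
      have hdp : ∀ p ∈ primitives S, d ∣ p := by
        intro p hp
        rcases eq_or_lt_of_le (hple p hp) with heq | hlt
        · exact heq ▸ hdn
        · refine hd p (Set.mem_union_left _ ?_)
          refine ⟨?_, ?_⟩
          · rw [hT]
            exact Or.inl ⟨hp.1, fun he => absurd (Set.mem_singleton_iff.mp he) (by omega)⟩
          · rw [Set.mem_Iio, hfT]; exact hlt
      have hall := dvd_of_dvd_primitives S d hdp
      obtain ⟨B, hB⟩ := S.cofinite.bddAbove
      have hB1 : B + 1 ∈ S.carrier := by
        by_contra hc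
        have := hB hc
        omega
      have hB2 : B + 2 ∈ S.carrier := by
        by_contra hc
        have := hB hc
        omega
      have hd1 : d ∣ 1 := by
        have := Nat.dvd_sub (hall _ hB2) (hall _ hB1)
        simpa using this
      exact Nat.dvd_one.mp hd1
    have hset : {d | ∀ x ∈ extLefts T, d ∣ x} = {1} := by
      ext d
      simp only [Set.mem_setOf_eq, Set.mem_singleton_iff]
      exact ⟨hdvd_one d, by rintro rfl; exact fun x _ => one_dvd x⟩
    rw [setGcd, hset, csSup_singleton]
  · rintro ⟨hf, hgcd⟩
    -- facts about T
    have hTc : T.carrierᶜ.Finite := T.cofinite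
    obtain ⟨hnmem, hle⟩ := nat_sSup_facts hf hn0
    have hnT : n ∉ T.carrier := hnmem
    have hgt : ∀ m, n < m → m ∈ T.carrier := by
      intro m hm
      by_contra hc
      exact absurd (hle m hc) (by omega)
    have hfrob_mem : n ∈ extLefts T := by
      rw [extLefts, hf]
      exact Set.mem_union_right _ rfl
    -- the only common divisor of extLefts T is 1
    have honly : ∀ d, (∀ x ∈ extLefts T, d ∣ x) → d = 1 := by
      intro d hd
      have hdn : d ∣ n := hd n hfrob_mem
      have hbdd : BddAbove {d | ∀ x ∈ extLefts T, d ∣ x} :=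
        ⟨n, fun e he => Nat.le_of_dvd hn0 (he n hfrob_mem)⟩
      have hle1 : d ≤ 1 := hgcd ▸ le_csSup hbdd hd
      have hd0 : d ≠ 0 := by
        rintro rfl
        have := Nat.eq_zero_of_zero_dvd hdn
        omega
      omega
    -- extLefts T is finite
    have hsubIic : extLefts T ⊆ Set.Iic n := by
      rintro x (⟨-, hx⟩ | hx)
      · rw [Set.mem_Iio, hf] at hx
        exact le_of_lt hx
      · rw [Set.mem_Iic, Set.mem_singleton_iff.mp hx, hf]
    have hfin : (extLefts T).Finite := (Set.finite_Iic n).subset hsubIic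
    have hcoe : (hfin.toFinset : Set ℕ) = extLefts T := hfin.coe_toFinset
    have hgcd1 : hfin.toFinset.gcd id = 1 := by
      apply honly
      intro x hx
      exact Finset.gcd_dvd (by rwa [hfin.mem_toFinset])
    obtain ⟨N, hN⟩ := closure_gcd hfin.toFinset
    rw [hgcd1, hcoe] at hN
    set M := AddSubmonoid.closure (extLefts T) with hM
    -- M is cofinite
    have hcof : ((M : Set ℕ)ᶜ).Finite := by
      apply Set.Finite.subset (Set.finite_Iio N)
      intro x hx
      rw [Set.mem_Iio]
      by_contra hc
      push_neg at hc
      exact hx (hN x (one_dvd x) hc)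
    -- generators in M
    have hlefts_sub : lefts T ⊆ (M : Set ℕ) := fun x hx =>
      AddSubmonoid.subset_closure (Set.mem_union_left _ hx)
    have hnM : n ∈ M := AddSubmonoid.subset_closure hfrob_mem
    -- the upper bound submonoid U
    have hzero_lefts : 0 ∈ lefts T := ⟨T.zero_mem, by rw [Set.mem_Iio, hf]; omega⟩
    set U : AddSubmonoid ℕ :=
      { carrier := lefts T ∪ {n} ∪ Set.Ioi n
        zero_mem' := Or.inl (Or.inl hzero_lefts)
        add_mem' := by
          rintro a b (( ⟨haT, han⟩ | ha) | ha) ((⟨hbT, hbn⟩ | hb) | hb)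
          · rw [Set.mem_Iio, hf] at han hbn
            have habT : a + b ∈ T.carrier := T.add_mem haT hbT
            rcases lt_trichotomy (a + b) n with h | h | h
            · exact Or.inl (Or.inl ⟨habT, by rw [Set.mem_Iio, hf]; exact h⟩)
            · exact absurd (h ▸ habT) hnT
            · exact Or.inr h
          · rw [Set.mem_singleton_iff] at hb
            rw [Set.mem_Iio, hf] at han
            rcases eq_or_ne a 0 with rfl | ha0
            · exact Or.inl (Or.inr (by simp [hb]))
            · exact Or.inr (by rw [Set.mem_Ioi]; omega)
          · rw [Set.mem_Ioi] at hb
            exact Or.inr (by rw [Set.mem_Ioi]; omega)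
          · rw [Set.mem_singleton_iff] at ha
            rw [Set.mem_Iio, hf] at hbn
            rcases eq_or_ne b 0 with rfl | hb0
            · exact Or.inl (Or.inr (by simp [ha]))
            · exact Or.inr (by rw [Set.mem_Ioi]; omega)
          · rw [Set.mem_singleton_iff] at ha hb
            exact Or.inr (by rw [Set.mem_Ioi]; omega)
          · rw [Set.mem_Ioi] at hb
            exact Or.inr (by rw [Set.mem_Ioi]; omega)
          · rw [Set.mem_Ioi] at ha
            exact Or.inr (by rw [Set.mem_Ioi]; omega)
          · rw [Set.mem_Ioi] at ha
            exact Or.inr (by rw [Set.mem_Ioi]; omega)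
          · rw [Set.mem_Ioi] at ha
            exact Or.inr (by rw [Set.mem_Ioi]; omega) } with hU
    have hMU : M ≤ U := by
      rw [hM]
      apply AddSubmonoid.closure_le.mpr
      rintro x (hx | hx)
      · exact Or.inl (Or.inl hx)
      · rw [Set.mem_singleton_iff.mp hx, hf]
        exact Or.inl (Or.inr rfl)
    have hC1 : ∀ x ∈ M, x ≤ n → x ∈ lefts T ∪ {n} := by
      intro x hx hxn
      rcases hMU hx with (h | h) | h
      · exact Or.inl h
      · exact Or.inr h
      · rw [Set.mem_Ioi] at h; omega
    -- decomposability of elements above n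
    have hC2 : ∀ x, x ∈ M → n < x →
        ∃ a b : ℕ, a ∈ (M : Set ℕ) ∧ b ∈ (M : Set ℕ) ∧ a ≠ 0 ∧ b ≠ 0 ∧ x = a + b := by
      intro x hx
      induction hx using AddSubmonoid.closure_induction with
      | mem y hy =>
        intro hy2
        have := hsubIic hy
        rw [Set.mem_Iic] at this
        omega
      | zero => intro h; omega
      | add y z hy hz ihy ihz =>
        intro hyz
        rcases eq_or_ne y 0 with rfl | hy0
        · rw [zero_add] at hyz ⊢
          exact ihz hyz
        rcases eq_or_ne z 0 with rfl | hz0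
        · rw [add_zero] at hyz ⊢
          exact ihy hyz
        exact ⟨y, z, hy, hz, hy0, hz0, rfl⟩
    -- n is a primitive of the semigroup M
    refine ⟨⟨M, M.zero_mem, fun a b ha hb => M.add_mem ha hb, hcof⟩, ?_, ?_⟩
    · -- maxPrim = n
      show sSup (primitives ⟨M, _, _, _⟩) = n
      have hprim : primitives ⟨(M : Set ℕ), M.zero_mem, fun a b ha hb => M.add_mem ha hb, hcof⟩ =
          primitives ⟨(M : Set ℕ), M.zero_mem, fun a b ha hb => M.add_mem ha hb, hcof⟩ := rfl
      have hnprim : n ∈ primitives ⟨(M : Set ℕ), M.zero_mem,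
          fun a b ha hb => M.add_mem ha hb, hcof⟩ := by
        refine ⟨hnM, by omega, ?_⟩
        rintro ⟨a, b, haM, hbM, ha0, hb0, hab⟩
        have haln : a < n := by omega
        have hbln : b < n := by omega
        have haT : a ∈ T.carrier := by
          rcases hC1 a haM (by omega) with h | h
          · exact h.1
          · rw [Set.mem_singleton_iff] at h; omega
        have hbT : b ∈ T.carrier := by
          rcases hC1 b hbM (by omega) with h | h
          · exact h.1
          · rw [Set.mem_singleton_iff] at h; omega
        exact hnT (hab ▸ T.add_mem haT hbT)
      have hbound : ∀ p ∈ primitives ⟨(M : Set ℕ), M.zero_mem,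
          fun a b ha hb => M.add_mem ha hb, hcof⟩, p ≤ n := by
        intro p hp
        by_contra hc
        push_neg at hc
        exact hp.2.2 (hC2 p hp.1 hc)
      exact le_antisymm (csSup_le ⟨n, hnprim⟩ hbound) (le_csSup ⟨n, hbound⟩ hnprim)
    · -- carrier equality
      show T.carrier = ((M : Set ℕ) \ {n}) ∪ Set.Ioi n
      ext x
      constructor
      · intro hx
        rcases lt_or_ge n x with h | h
        · exact Or.inr h
        · have hxn : x ≠ n := fun he => hnT (he ▸ hx)
          have hxlt : x < n := by omega
          refine Or.inl ⟨hlefts_sub ⟨hx, by rw [Set.mem_Iio, hf]; exact hxlt⟩, ?_⟩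
          rw [Set.mem_singleton_iff]; exact hxn
      · rintro (⟨hxM, hxn⟩ | hx)
        · rw [Set.mem_singleton_iff] at hxn
          rcases lt_or_ge n x with h | h
          · exact hgt x h
          · rcases hC1 x hxM h with h' | h'
            · exact h'.1
            · rw [Set.mem_singleton_iff] at h'; exact absurd h' hxn
        · exact hgt x hx
end

section
/- For every prime p, the number of numerical semigroups with maximum primitive p equals the number of numerical semigroups with Frobenius number p minus one: A_p = N_p − 1. -/
open NumericalSemigroup

namespace NumericalSemigroup

lemma ext' {S T : NumericalSemigroup} (h : S.carrier = T.carrier) : S = T := by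
  cases S; cases T; simpa using h

lemma le_frob {S : NumericalSemigroup} {n : ℕ} (h : n ∉ S.carrier) : n ≤ frob S :=
  le_csSup S.cofinite.bddAbove h

lemma mem_of_frob_lt_s9 {S : NumericalSemigroup} {n : ℕ} (h : frob S < n) : n ∈ S.carrier := by
  by_contra hn; exact absurd (le_frob hn) (not_le.mpr h)

lemma primitives_bddAbove (S : NumericalSemigroup) : BddAbove (primitives S) := by
  refine ⟨2 * frob S + 1, fun x hx => ?_⟩
  by_contra hlt
  push_neg at hlt
  obtain ⟨hxS, hx0, hns⟩ := hx
  exact hns ⟨x - (frob S + 1), frob S + 1,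
    mem_of_frob_lt_s9 (by omega), mem_of_frob_lt_s9 (by omega), by omega, by omega, by omega⟩

lemma primitives_finite (S : NumericalSemigroup) : (primitives S).Finite := by
  obtain ⟨b, hb⟩ := S.primitives_bddAbove
  exact (Set.finite_Iic b).subset hb

lemma le_maxPrim {S : NumericalSemigroup} {x : ℕ} (hx : x ∈ primitives S) : x ≤ maxPrim S :=
  le_csSup S.primitives_bddAbove hx

lemma maxPrim_mem {S : NumericalSemigroup} (h : maxPrim S ≠ 0) : maxPrim S ∈ primitives S := by
  rcases Set.eq_empty_or_nonempty (primitives S) with he | hne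
  · exact absurd (by simp [maxPrim, he]) h
  · exact hne.csSup_mem S.primitives_finite

/-- Every element is in the additive closure of the primitives. -/
lemma mem_closure_primitives (S : NumericalSemigroup) :
    ∀ x ∈ S.carrier, x ∈ AddSubmonoid.closure (primitives S) := by
  intro x
  induction x using Nat.strong_induction_on with
  | _ x ih =>
    intro hx
    rcases eq_or_ne x 0 with rfl | hx0
    · exact AddSubmonoid.zero_mem _
    by_cases hprim : x ∈ primitives S
    · exact AddSubmonoid.subset_closure hprim
    · have : ∃ a b : ℕ, a ∈ S.carrier ∧ b ∈ S.carrier ∧ a ≠ 0 ∧ b ≠ 0 ∧ x = a + b := by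
        by_contra hc
        exact hprim ⟨hx, hx0, hc⟩
      obtain ⟨a, b, ha, hb, ha0, hb0, hab⟩ := this
      exact hab ▸ AddSubmonoid.add_mem _ (ih a (by omega) ha) (ih b (by omega) hb)

/-- If the maximum primitive is `p`, then `S` is generated by its elements below `p`
together with `p`. -/
lemma mem_closure_of_maxPrim {S : NumericalSemigroup} {p : ℕ} (hmax : maxPrim S = p) :
    ∀ x ∈ S.carrier, x ∈ AddSubmonoid.closure ((S.carrier ∩ Set.Iio p) ∪ {p}) := by
  intro x
  induction x using Nat.strong_induction_on with
  | _ x ih =>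
    intro hx
    rcases lt_trichotomy x p with hlt | rfl | hgt
    · exact AddSubmonoid.subset_closure (Or.inl ⟨hx, hlt⟩)
    · exact AddSubmonoid.subset_closure (Or.inr rfl)
    · have hx0 : x ≠ 0 := by omega
      have hprim : x ∉ primitives S := fun h => by
        have := le_maxPrim h; omega
      have : ∃ a b : ℕ, a ∈ S.carrier ∧ b ∈ S.carrier ∧ a ≠ 0 ∧ b ≠ 0 ∧ x = a + b := by
        by_contra hc
        exact hprim ⟨hx, hx0, hc⟩
      obtain ⟨a, b, ha, hb, ha0, hb0, hab⟩ := this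
      exact hab ▸ AddSubmonoid.add_mem _ (ih a (by omega) ha) (ih b (by omega) hb)

/-- There is a primitive other than `p` when `maxPrim S = p` is prime. -/
lemma exists_small_primitive {S : NumericalSemigroup} {p : ℕ} (hp : p.Prime)
    (hmax : maxPrim S = p) : ∃ q ∈ primitives S, 0 < q ∧ q < p := by
  by_contra hc
  push_neg at hc
  have hsub : primitives S ⊆ {p} := by
    intro q hq
    have h1 : q ≤ p := hmax ▸ le_maxPrim hq
    have h2 : q ≠ 0 := hq.2.1
    have := hc q hq
    simp only [Set.mem_singleton_iff]
    omega
  have hdvd : ∀ x ∈ S.carrier, p ∣ x := by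
    intro x hx
    have := mem_closure_primitives S x hx
    have h2 : x ∈ AddSubmonoid.closure ({p} : Set ℕ) :=
      AddSubmonoid.closure_mono hsub this
    obtain ⟨n, hn⟩ := AddSubmonoid.mem_closure_singleton.mp h2
    exact ⟨n, by rw [← hn]; simp [smul_eq_mul, Nat.mul_comm]⟩
  have h1 : p ∣ frob S + 1 := hdvd _ (mem_of_frob_lt_s9 (by omega))
  have h2 : p ∣ frob S + 2 := hdvd _ (mem_of_frob_lt_s9 (by omega))
  have h3 : p ∣ 1 := by
    have h4 := Nat.dvd_sub h2 h1
    have h5 : frob S + 2 - (frob S + 1) = 1 := by omega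
    rwa [h5] at h4
  exact absurd (Nat.dvd_one.mp h3) (Nat.Prime.one_lt hp).ne'

/-- The ordinary semigroup `{0} ∪ (p, ∞)`. -/
def ordinary (p : ℕ) : NumericalSemigroup where
  carrier := {0} ∪ Set.Ioi p
  zero_mem := Or.inl rfl
  add_mem := by
    rintro a b (rfl | ha) (rfl | hb)
    · exact Or.inl rfl
    · exact Or.inr (by simpa using hb)
    · exact Or.inr (by simpa using ha)
    · exact Or.inr (by simp only [Set.mem_Ioi] at *; omega)
  cofinite := (Set.finite_Iic p).subset (by
    intro x hx
    simp only [Set.mem_compl_iff, Set.mem_union, Set.mem_singleton_iff, Set.mem_Ioi,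
      not_or, not_lt] at hx
    exact hx.2)

lemma frob_ordinary {p : ℕ} (hp : 0 < p) : frob (ordinary p) = p := by
  have hmem : p ∈ (ordinary p).carrierᶜ := by
    simp only [ordinary, Set.mem_compl_iff, Set.mem_union, Set.mem_singleton_iff, Set.mem_Ioi,
      not_or]
    omega
  refine le_antisymm (csSup_le ⟨p, hmem⟩ ?_) (le_csSup (ordinary p).cofinite.bddAbove hmem)
  intro x hx
  simp only [ordinary, Set.mem_compl_iff, Set.mem_union, Set.mem_singleton_iff, Set.mem_Ioi,
    not_or, not_lt] at hx
  exact hx.2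

lemma frob_not_mem {S : NumericalSemigroup} (h : frob S ≠ 0) : frob S ∉ S.carrier := by
  rcases Set.eq_empty_or_nonempty (S.carrierᶜ) with he | hne
  · exact absurd (by simp [frob, he]) h
  · exact hne.csSup_mem S.cofinite

/-- Closure of a set containing coprime-ish `q < p` with `p` prime is cofinite. -/
lemma closure_cofinite {q p : ℕ} (hq : 0 < q) (hqp : q < p) (hp : p.Prime) {A : Set ℕ}
    (hqA : q ∈ A) (hpA : p ∈ A) :
    ((AddSubmonoid.closure A : Set ℕ)ᶜ).Finite := by
  have hsub : (AddSubmonoid.closure ({q, p} : Set ℕ) : Set ℕ) ⊆ AddSubmonoid.closure A := by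
    apply AddSubmonoid.closure_mono
    rintro x (rfl | rfl)
    · exact hqA
    · exact hpA
  have hcompl : ((AddSubmonoid.closure A : Set ℕ)ᶜ) ⊆
      ((AddSubmonoid.closure ({q, p} : Set ℕ) : Set ℕ)ᶜ) := Set.compl_subset_compl.mpr hsub
  rcases eq_or_lt_of_le (Nat.succ_le_of_lt hq) with h1 | h1
  · -- q = 1 : closure is everything
    have : ∀ n : ℕ, n ∈ AddSubmonoid.closure ({q, p} : Set ℕ) := by
      intro n
      have h1' : q = 1 := by omega
      have := nsmul_mem (AddSubmonoid.subset_closure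
        (show q ∈ ({q, p} : Set ℕ) from Or.inl rfl)) n
      simpa [h1', smul_eq_mul] using this
    have : ((AddSubmonoid.closure ({q, p} : Set ℕ) : Set ℕ)ᶜ) = ∅ := by
      ext n; simp [this n]
    exact ((this ▸ Set.finite_empty).subset hcompl)
  · -- 1 < q
    have hcop : Nat.Coprime q p := by
      have : ¬ p ∣ q := fun hd => absurd (Nat.le_of_dvd hq hd) (by omega)
      exact (Nat.coprime_comm.mp ((Nat.Prime.coprime_iff_not_dvd hp).mpr this))
    have hfrob := frobeniusNumber_pair hcop h1 hp.one_lt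
    refine ((Set.finite_Iic (q * p - q - p)).subset ?_).subset hcompl
    intro k hk
    exact hfrob.2 hk

open scoped Classical

variable (p : ℕ)

/-- Forward map: delete `p` and fill in everything above `p`. -/
noncomputable def PhiNS (S : NumericalSemigroup) : NumericalSemigroup :=
  if h : p ∈ primitives S then
    { carrier := (S.carrier ∩ Set.Iio p) ∪ Set.Ioi p
      zero_mem := Or.inl ⟨S.zero_mem, Nat.pos_of_ne_zero h.2.1⟩
      add_mem := by
        rintro a b ha hb
        simp only [Set.mem_union, Set.mem_inter_iff, Set.mem_Iio, Set.mem_Ioi] at ha hb ⊢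
        rcases ha with ⟨ha, ha'⟩ | ha'
        · rcases hb with ⟨hb, hb'⟩ | hb'
          · rcases eq_or_ne a 0 with rfl | ha0
            · simpa using Or.inl ⟨hb, hb'⟩
            rcases eq_or_ne b 0 with rfl | hb0
            · simpa using Or.inl ⟨ha, ha'⟩
            have hne : a + b ≠ p := fun hab => h.2.2 ⟨a, b, ha, hb, ha0, hb0, hab.symm⟩
            rcases lt_or_gt_of_ne hne with hlt | hgt
            · exact Or.inl ⟨S.add_mem ha hb, hlt⟩
            · exact Or.inr hgt
          · exact Or.inr (by omega)
        · exact Or.inr (by omega)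
      cofinite := (Set.finite_Iic p).subset (by
        intro x hx
        simp only [Set.mem_compl_iff, Set.mem_union, Set.mem_inter_iff, Set.mem_Iio,
          Set.mem_Ioi, not_or, not_lt] at hx
        exact hx.2) }
  else S

lemma PhiNS_carrier {S : NumericalSemigroup} (h : p ∈ primitives S) :
    (PhiNS p S).carrier = (S.carrier ∩ Set.Iio p) ∪ Set.Ioi p := by
  rw [PhiNS, dif_pos h]

lemma PhiNS_frob {S : NumericalSemigroup} (h : p ∈ primitives S) :
    frob (PhiNS p S) = p := by
  have hpc : p ∉ (PhiNS p S).carrier := by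
    rw [PhiNS_carrier p h]
    simp
  refine le_antisymm (csSup_le ⟨p, hpc⟩ ?_) (le_frob hpc)
  intro x hx
  rw [PhiNS_carrier p h] at hx
  simp only [Set.mem_compl_iff, Set.mem_union, Set.mem_inter_iff, Set.mem_Iio, Set.mem_Ioi,
    not_or, not_lt] at hx
  exact hx.2

/-- Backward map: take the submonoid generated by small elements plus `p`. -/
noncomputable def PsiNS (T : NumericalSemigroup) : NumericalSemigroup :=
  if h : ∃ q, q ∈ T.carrier ∧ 0 < q ∧ q < p ∧ p.Prime then
    { carrier := (AddSubmonoid.closure ((T.carrier ∩ Set.Iio p) ∪ {p}) : Set ℕ)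
      zero_mem := AddSubmonoid.zero_mem _
      add_mem := fun _ _ ha hb => AddSubmonoid.add_mem _ ha hb
      cofinite := by
        obtain ⟨q, hqT, hq, hqp, hp⟩ := h
        exact closure_cofinite hq hqp hp (Or.inl ⟨hqT, hqp⟩) (Or.inr rfl) }
  else T

lemma PsiNS_carrier {T : NumericalSemigroup} (h : ∃ q, q ∈ T.carrier ∧ 0 < q ∧ q < p ∧ p.Prime) :
    (PsiNS p T).carrier = (AddSubmonoid.closure ((T.carrier ∩ Set.Iio p) ∪ {p}) : Set ℕ) := by
  rw [PsiNS, dif_pos h]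

end NumericalSemigroup

theorem countMaxPrim_prime (p : ℕ) (hp : p.Prime) :
    countMaxPrim p = countFrob p - 1 := by
  classical
  have hp1 : 1 < p := hp.one_lt
  set A := {S : NumericalSemigroup | maxPrim S = p} with hA
  set F := {S : NumericalSemigroup | frob S = p} with hF
  have hOF : ordinary p ∈ F := by
    show frob (ordinary p) = p
    exact frob_ordinary (by omega)
  -- F is finite
  have hFfin : F.Finite := by
    have himg : (fun S : NumericalSemigroup => S.carrier ∩ Set.Iic p) '' F ⊆
        {t | t ⊆ Set.Iic p} := by
      rintro t ⟨S, _, rfl⟩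
      exact Set.inter_subset_right
    have hinj : Set.InjOn (fun S : NumericalSemigroup => S.carrier ∩ Set.Iic p) F := by
      intro S hS T hT hST
      apply ext'
      have hrec : ∀ U : NumericalSemigroup, frob U = p →
          U.carrier = (U.carrier ∩ Set.Iic p) ∪ Set.Ioi p := by
        intro U hU
        ext x
        constructor
        · intro hx
          rcases le_or_gt x p with h | h
          · exact Or.inl ⟨hx, h⟩
          · exact Or.inr h
        · rintro (⟨hx, _⟩ | hx)
          · exact hx
          · exact mem_of_frob_lt_s9 (hU ▸ hx)
      rw [hrec S hS, hrec T hT]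
      simp only at hST
      rw [hST]
    exact Set.Finite.of_finite_image (((Set.finite_Iic p).finite_subsets).subset himg) hinj
  -- the main claims
  have claimA : ∀ S ∈ A, p ∈ primitives S := by
    intro S hS
    have hmax : maxPrim S = p := hS
    exact hmax ▸ maxPrim_mem (by omega)
  have claimB : ∀ S ∈ A, PhiNS p S ∈ F \ {ordinary p} := by
    intro S hS
    have hmax : maxPrim S = p := hS
    refine ⟨PhiNS_frob p (claimA S hS), ?_⟩
    obtain ⟨q, hq, hq0, hqp⟩ := exists_small_primitive hp hmax
    intro heq
    simp only [Set.mem_singleton_iff] at heq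
    have h1 : q ∈ (PhiNS p S).carrier := by
      rw [PhiNS_carrier p (claimA S hS)]
      exact Or.inl ⟨hq.1, hqp⟩
    rw [heq] at h1
    rcases h1 with h1 | h1
    · simp only [Set.mem_singleton_iff] at h1; omega
    · simp only [Set.mem_Ioi] at h1; omega
  have claimC : ∀ S ∈ A, PsiNS p (PhiNS p S) = S := by
    intro S hS
    have hmax : maxPrim S = p := hS
    have hprim := claimA S hS
    obtain ⟨q, hq, hq0, hqp⟩ := exists_small_primitive hp hmax
    have cond : ∃ r, r ∈ (PhiNS p S).carrier ∧ 0 < r ∧ r < p ∧ p.Prime := by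
      refine ⟨q, ?_, hq0, hqp, hp⟩
      rw [PhiNS_carrier p hprim]
      exact Or.inl ⟨hq.1, hqp⟩
    apply ext'
    rw [PsiNS_carrier p cond]
    have hint : (PhiNS p S).carrier ∩ Set.Iio p = S.carrier ∩ Set.Iio p := by
      rw [PhiNS_carrier p hprim]
      ext x
      simp only [Set.mem_inter_iff, Set.mem_union, Set.mem_Iio, Set.mem_Ioi]
      constructor
      · rintro ⟨⟨hx, _⟩ | hx, hxp⟩
        · exact ⟨hx, hxp⟩
        · omega
      · rintro ⟨hx, hxp⟩
        exact ⟨Or.inl ⟨hx, hxp⟩, hxp⟩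
    rw [hint]
    apply Set.Subset.antisymm
    · -- closure ⊆ S
      let M : AddSubmonoid ℕ :=
        { carrier := S.carrier
          zero_mem' := S.zero_mem
          add_mem' := fun ha hb => S.add_mem ha hb }
      have : AddSubmonoid.closure (S.carrier ∩ Set.Iio p ∪ {p}) ≤ M := by
        apply AddSubmonoid.closure_le.mpr
        rintro x (⟨hx, _⟩ | rfl)
        · exact hx
        · exact hprim.1
      exact fun x hx => this hx
    · exact fun x hx => mem_closure_of_maxPrim hmax x hx
  have claimD : ∀ T ∈ F \ ({ordinary p} : Set NumericalSemigroup),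
      PsiNS p T ∈ A ∧ PhiNS p (PsiNS p T) = T := by
    rintro T ⟨hTf, hTne⟩
    have hTf : frob T = p := hTf
    simp only [Set.mem_singleton_iff] at hTne
    have hpnot : p ∉ T.carrier := hTf ▸ frob_not_mem (by omega)
    have hIoi : ∀ x, p < x → x ∈ T.carrier := fun x hx => mem_of_frob_lt_s9 (hTf ▸ hx)
    have cond : ∃ r, r ∈ T.carrier ∧ 0 < r ∧ r < p ∧ p.Prime := by
      by_contra hc
      push_neg at hc
      apply hTne
      apply ext'
      ext x
      simp only [ordinary, Set.mem_union, Set.mem_singleton_iff, Set.mem_Ioi]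
      constructor
      · intro hx
        rcases eq_or_ne x 0 with rfl | hx0
        · exact Or.inl rfl
        rcases lt_trichotomy x p with h | rfl | h
        · exact absurd (hc x hx (by omega) h) (fun he => he hp)
        · exact absurd hx hpnot
        · exact Or.inr h
      · rintro (rfl | hx)
        · exact T.zero_mem
        · exact hIoi x hx
    have hcar : (PsiNS p T).carrier =
        (AddSubmonoid.closure ((T.carrier ∩ Set.Iio p) ∪ {p}) : Set ℕ) := PsiNS_carrier p cond
    have claim1 : ∀ x ∈ AddSubmonoid.closure ((T.carrier ∩ Set.Iio p) ∪ {p}),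
        x < p → x ∈ T.carrier := by
      intro x hx
      induction hx using AddSubmonoid.closure_induction with
      | mem y hy =>
        rcases hy with ⟨hy, _⟩ | rfl
        · exact fun _ => hy
        · intro h; omega
      | zero => exact fun _ => T.zero_mem
      | add a b ha hb iha ihb =>
        intro hab
        exact T.add_mem (iha (by omega)) (ihb (by omega))
    have claim2 : p ∈ primitives (PsiNS p T) := by
      refine ⟨?_, by omega, ?_⟩
      · rw [hcar]
        exact AddSubmonoid.subset_closure (Or.inr rfl)
      · rintro ⟨a, b, ha, hb, ha0, hb0, hab⟩
        rw [hcar] at ha hb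
        have haT : a ∈ T.carrier := claim1 a ha (by omega)
        have hbT : b ∈ T.carrier := claim1 b hb (by omega)
        exact hpnot (hab ▸ T.add_mem haT hbT)
    have claim3 : ∀ x ∈ primitives (PsiNS p T), x ≤ p := by
      intro x hx
      have hxc : x ∈ AddSubmonoid.closure ((T.carrier ∩ Set.Iio p) ∪ {p}) := by
        have h1 := hx.1
        rw [hcar] at h1
        exact h1
      have key : ∀ y ∈ AddSubmonoid.closure ((T.carrier ∩ Set.Iio p) ∪ {p}),
          y = 0 ∨ y ≤ p ∨ ∃ a b : ℕ, a ∈ (PsiNS p T).carrier ∧ b ∈ (PsiNS p T).carrier ∧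
            a ≠ 0 ∧ b ≠ 0 ∧ y = a + b := by
        intro y hy
        induction hy using AddSubmonoid.closure_induction with
        | mem z hz =>
          rcases hz with ⟨_, hz⟩ | rfl
          · exact Or.inr (Or.inl (le_of_lt hz))
          · exact Or.inr (Or.inl le_rfl)
        | zero => exact Or.inl rfl
        | add a b ha hb iha ihb =>
          rcases eq_or_ne a 0 with rfl | ha0
          · simpa using ihb
          rcases eq_or_ne b 0 with rfl | hb0
          · simpa using iha
          refine Or.inr (Or.inr ⟨a, b, ?_, ?_, ha0, hb0, rfl⟩)
          · rw [hcar]; exact ha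
          · rw [hcar]; exact hb
      rcases key x hxc with h | h | h
      · exact absurd h hx.2.1
      · exact h
      · exact absurd h hx.2.2
    have hmaxPsi : maxPrim (PsiNS p T) = p :=
      le_antisymm (csSup_le ⟨p, claim2⟩ claim3) (le_maxPrim claim2)
    refine ⟨hmaxPsi, ?_⟩
    apply ext'
    rw [PhiNS_carrier p claim2]
    have hint : (PsiNS p T).carrier ∩ Set.Iio p = T.carrier ∩ Set.Iio p := by
      ext x
      simp only [Set.mem_inter_iff, Set.mem_Iio]
      constructor
      · rintro ⟨hx, hxp⟩
        rw [hcar] at hx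
        exact ⟨claim1 x hx hxp, hxp⟩
      · rintro ⟨hx, hxp⟩
        refine ⟨?_, hxp⟩
        rw [hcar]
        exact AddSubmonoid.subset_closure (Or.inl ⟨hx, hxp⟩)
    rw [hint]
    ext x
    simp only [Set.mem_union, Set.mem_inter_iff, Set.mem_Iio, Set.mem_Ioi]
    constructor
    · rintro (⟨hx, _⟩ | hx)
      · exact hx
      · exact hIoi x hx
    · intro hx
      rcases lt_trichotomy x p with h | rfl | h
      · exact Or.inl ⟨hx, h⟩
      · exact absurd hx hpnot
      · exact Or.inr h
  -- conclude
  have hinj : Set.InjOn (PhiNS p) A := by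
    intro S hS S' hS' h
    rw [← claimC S hS, ← claimC S' hS', h]
  have himg : PhiNS p '' A = F \ {ordinary p} := by
    apply Set.Subset.antisymm
    · rintro _ ⟨S, hS, rfl⟩
      exact claimB S hS
    · intro T hT
      exact ⟨PsiNS p T, (claimD T hT).1, (claimD T hT).2⟩
  calc countMaxPrim p = A.ncard := rfl
    _ = (PhiNS p '' A).ncard := (Set.ncard_image_of_injOn hinj).symm
    _ = (F \ {ordinary p}).ncard := by rw [himg]
    _ = F.ncard - 1 := Set.ncard_diff_singleton_of_mem hOF
    _ = countFrob p - 1 := rfl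
end
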